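/- arXiv:1911.09802 — 3 statements merged into one kernel-verified Lean document; each statement's English description precedes it below -/
import Mathlib

section
/- If X ~ N(γ, σ_X²) and Y ~ N(βγ, σ_Y²) are independent Gaussians, then Var[(XY − βX² + βσ_X²)/σ_Y²] = (w + v) + β² v (w + 2v), where w = γ²/σ_Y² and v = σ_X²/σ_Y². -/
open MeasureTheory ProbabilityTheory Real
open scoped NNReal ENNReal

section Aux

lemma integrable_pow_mul_exp {b : ℝ} (hb : 0 < b) (k : ℕ) :
    Integrable (fun x : ℝ => x ^ k * Real.exp (-b * x ^ 2)) := by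
  have h := integrable_rpow_mul_exp_neg_mul_sq hb (s := (k : ℝ)) (lt_of_lt_of_le neg_one_lt_zero (Nat.cast_nonneg k))
  simpa [Real.rpow_natCast] using h

-- derivative of exp(-b x^2)
lemma hasDerivAt_expsq (b x : ℝ) :
    HasDerivAt (fun x : ℝ => Real.exp (-b * x ^ 2)) (-2 * b * x * Real.exp (-b * x ^ 2)) x := by
  have h : HasDerivAt (fun x : ℝ => -b * x ^ 2) (-b * (2 * x)) x :=
    ((hasDerivAt_pow 2 x).const_mul (-b)).congr_deriv (by ring)
  simpa [mul_comm, mul_assoc, mul_left_comm] using h.exp.congr_deriv (by ring)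

lemma J1 {b : ℝ} (hb : 0 < b) : ∫ x : ℝ, x * Real.exp (-b * x ^ 2) = 0 := by
  have hderiv : ∀ x : ℝ, HasDerivAt (fun x : ℝ => (-(2 * b))⁻¹ * Real.exp (-b * x ^ 2))
      (x * Real.exp (-b * x ^ 2)) x := by
    intro x
    have := (hasDerivAt_expsq b x).const_mul (-(2 * b))⁻¹
    refine this.congr_deriv ?_
    field_simp
  have hint : Integrable (fun x : ℝ => x * Real.exp (-b * x ^ 2)) := by
    simpa using integrable_pow_mul_exp hb 1
  have hf : Integrable (fun x : ℝ => (-(2 * b))⁻¹ * Real.exp (-b * x ^ 2)) :=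
    (integrable_exp_neg_mul_sq hb).const_mul _
  exact integral_eq_zero_of_hasDerivAt_of_integrable hderiv hint hf

lemma J2 {b : ℝ} (hb : 0 < b) :
    ∫ x : ℝ, x ^ 2 * Real.exp (-b * x ^ 2) = Real.sqrt (π / b) / (2 * b) := by
  have hderiv : ∀ x : ℝ, HasDerivAt (fun x : ℝ => x * Real.exp (-b * x ^ 2))
      (Real.exp (-b * x ^ 2) - 2 * b * (x ^ 2 * Real.exp (-b * x ^ 2))) x := by
    intro x
    have := (hasDerivAt_id x).mul (hasDerivAt_expsq b x)
    refine this.congr_deriv ?_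
    simp only [id_eq]
    ring
  have h1 : Integrable (fun x : ℝ => x ^ 2 * Real.exp (-b * x ^ 2)) := integrable_pow_mul_exp hb 2
  have h0 : Integrable (fun x : ℝ => Real.exp (-b * x ^ 2)) := integrable_exp_neg_mul_sq hb
  have hf : Integrable (fun x : ℝ => x * Real.exp (-b * x ^ 2)) := by
    simpa using integrable_pow_mul_exp hb 1
  have hz := integral_eq_zero_of_hasDerivAt_of_integrable hderiv (h0.sub ((h1.const_mul (2*b)))) hf
  rw [integral_sub h0 (h1.const_mul (2*b)), integral_const_mul, integral_gaussian] at hz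
  have hb' : (2 : ℝ) * b ≠ 0 := by positivity
  field_simp at hz ⊢
  linarith

lemma J3 {b : ℝ} (hb : 0 < b) : ∫ x : ℝ, x ^ 3 * Real.exp (-b * x ^ 2) = 0 := by
  have hderiv : ∀ x : ℝ, HasDerivAt
      (fun x : ℝ => (-(2 * b))⁻¹ * (x ^ 2 + b⁻¹) * Real.exp (-b * x ^ 2))
      (x ^ 3 * Real.exp (-b * x ^ 2)) x := by
    intro x
    have h1 : HasDerivAt (fun x : ℝ => (-(2 * b))⁻¹ * (x ^ 2 + b⁻¹))
        ((-(2 * b))⁻¹ * (2 * x)) x := by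
      have := ((hasDerivAt_pow 2 x).add_const b⁻¹).const_mul (-(2 * b))⁻¹
      simpa using this
    have := h1.mul (hasDerivAt_expsq b x)
    refine this.congr_deriv ?_
    field_simp
    ring
  have hint : Integrable (fun x : ℝ => x ^ 3 * Real.exp (-b * x ^ 2)) := integrable_pow_mul_exp hb 3
  have hf : Integrable (fun x : ℝ => (-(2 * b))⁻¹ * (x ^ 2 + b⁻¹) * Real.exp (-b * x ^ 2)) := by
    have : (fun x : ℝ => (-(2 * b))⁻¹ * (x ^ 2 + b⁻¹) * Real.exp (-b * x ^ 2))
        = fun x : ℝ => (-(2 * b))⁻¹ * (x ^ 2 * Real.exp (-b * x ^ 2))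
          + ((-(2 * b))⁻¹ * b⁻¹) * Real.exp (-b * x ^ 2) := by
      ext x; ring
    rw [this]
    exact ((integrable_pow_mul_exp hb 2).const_mul _).add ((integrable_exp_neg_mul_sq hb).const_mul _)
  exact integral_eq_zero_of_hasDerivAt_of_integrable hderiv hint hf

lemma J4 {b : ℝ} (hb : 0 < b) :
    ∫ x : ℝ, x ^ 4 * Real.exp (-b * x ^ 2) = 3 * Real.sqrt (π / b) / (4 * b ^ 2) := by
  have hderiv : ∀ x : ℝ, HasDerivAt (fun x : ℝ => x ^ 3 * Real.exp (-b * x ^ 2))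
      (3 * (x ^ 2 * Real.exp (-b * x ^ 2)) - 2 * b * (x ^ 4 * Real.exp (-b * x ^ 2))) x := by
    intro x
    have := (hasDerivAt_pow 3 x).mul (hasDerivAt_expsq b x)
    refine this.congr_deriv ?_
    ring
  have h2 : Integrable (fun x : ℝ => x ^ 2 * Real.exp (-b * x ^ 2)) := integrable_pow_mul_exp hb 2
  have h4 : Integrable (fun x : ℝ => x ^ 4 * Real.exp (-b * x ^ 2)) := integrable_pow_mul_exp hb 4
  have hf : Integrable (fun x : ℝ => x ^ 3 * Real.exp (-b * x ^ 2)) := integrable_pow_mul_exp hb 3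
  have hz := integral_eq_zero_of_hasDerivAt_of_integrable hderiv
    ((h2.const_mul 3).sub (h4.const_mul (2*b))) hf
  rw [integral_sub (h2.const_mul 3) (h4.const_mul (2*b)), integral_const_mul, integral_const_mul,
    J2 hb] at hz
  have hb' : (2 : ℝ) * b ≠ 0 := by positivity
  field_simp at hz ⊢
  linarith



variable {v : ℝ≥0}

lemma aux_pdf0 (hv : v ≠ 0) (y : ℝ) :
    gaussianPDFReal 0 v y
      = (Real.sqrt (2 * π * v))⁻¹ * Real.exp (-(((2:ℝ) * v)⁻¹) * y ^ 2) := by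
  have hv' : (0:ℝ) < v := lt_of_le_of_ne (v.coe_nonneg) (by exact_mod_cast hv.symm)
  simp only [gaussianPDFReal, sub_zero]
  congr 1
  field_simp

lemma bpos (hv : v ≠ 0) : (0:ℝ) < ((2:ℝ) * v)⁻¹ := by
  have hv' : (0:ℝ) < v := lt_of_le_of_ne (v.coe_nonneg) (by exact_mod_cast hv.symm)
  positivity

lemma integrable_pdf0_pow (hv : v ≠ 0) (k : ℕ) :
    Integrable (fun y : ℝ => gaussianPDFReal 0 v y * y ^ k) := by
  have h := (integrable_pow_mul_exp (bpos hv) k).const_mul (Real.sqrt (2 * π * v))⁻¹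
  refine h.congr (Filter.Eventually.of_forall fun y => ?_)
  simp only [aux_pdf0 hv]
  ring

lemma G0 (hv : v ≠ 0) : ∫ y : ℝ, gaussianPDFReal 0 v y * y ^ 0 = 1 := by
  simpa using integral_gaussianPDFReal_eq_one 0 hv

lemma hcJ0 (hv : v ≠ 0) :
    (Real.sqrt (2 * π * v))⁻¹ * Real.sqrt (π / ((2:ℝ) * v)⁻¹) = 1 := by
  have h := G0 hv
  simp only [pow_zero, mul_one] at h
  calc (Real.sqrt (2 * π * v))⁻¹ * Real.sqrt (π / ((2:ℝ) * v)⁻¹)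
      = (Real.sqrt (2 * π * v))⁻¹ * ∫ x : ℝ, Real.exp (-((2:ℝ) * v)⁻¹ * x ^ 2) := by
        rw [integral_gaussian]
    _ = ∫ x : ℝ, gaussianPDFReal 0 v x := by
        rw [← integral_const_mul]
        congr 1 with x
        rw [aux_pdf0 hv]
    _ = 1 := h

lemma G1 (hv : v ≠ 0) : ∫ y : ℝ, gaussianPDFReal 0 v y * y ^ 1 = 0 := by
  have : (fun y : ℝ => gaussianPDFReal 0 v y * y ^ 1)
      = fun y : ℝ => (Real.sqrt (2 * π * v))⁻¹ * (y * Real.exp (-((2:ℝ) * v)⁻¹ * y ^ 2)) := by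
    ext y; rw [aux_pdf0 hv]; ring
  rw [this, integral_const_mul, J1 (bpos hv), mul_zero]

lemma G3 (hv : v ≠ 0) : ∫ y : ℝ, gaussianPDFReal 0 v y * y ^ 3 = 0 := by
  have : (fun y : ℝ => gaussianPDFReal 0 v y * y ^ 3)
      = fun y : ℝ => (Real.sqrt (2 * π * v))⁻¹ * (y ^ 3 * Real.exp (-((2:ℝ) * v)⁻¹ * y ^ 2)) := by
    ext y; rw [aux_pdf0 hv]; ring
  rw [this, integral_const_mul, J3 (bpos hv), mul_zero]

lemma G2 (hv : v ≠ 0) : ∫ y : ℝ, gaussianPDFReal 0 v y * y ^ 2 = (v : ℝ) := by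
  have hv' : (0:ℝ) < v := lt_of_le_of_ne (v.coe_nonneg) (by exact_mod_cast hv.symm)
  have : (fun y : ℝ => gaussianPDFReal 0 v y * y ^ 2)
      = fun y : ℝ => (Real.sqrt (2 * π * v))⁻¹ * (y ^ 2 * Real.exp (-((2:ℝ) * v)⁻¹ * y ^ 2)) := by
    ext y; rw [aux_pdf0 hv]; ring
  rw [this, integral_const_mul, J2 (bpos hv), mul_div_assoc', hcJ0 hv]
  field_simp

lemma G4 (hv : v ≠ 0) : ∫ y : ℝ, gaussianPDFReal 0 v y * y ^ 4 = 3 * (v : ℝ) ^ 2 := by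
  have hv' : (0:ℝ) < v := lt_of_le_of_ne (v.coe_nonneg) (by exact_mod_cast hv.symm)
  have : (fun y : ℝ => gaussianPDFReal 0 v y * y ^ 4)
      = fun y : ℝ => (Real.sqrt (2 * π * v))⁻¹ * (y ^ 4 * Real.exp (-((2:ℝ) * v)⁻¹ * y ^ 2)) := by
    ext y; rw [aux_pdf0 hv]; ring
  rw [this, integral_const_mul, J4 (bpos hv)]
  rw [show (3:ℝ) * Real.sqrt (π / ((2:ℝ) * v)⁻¹) / (4 * (((2:ℝ) * v)⁻¹) ^ 2)
      = Real.sqrt (π / ((2:ℝ) * v)⁻¹) * (3 / (4 * (((2:ℝ) * v)⁻¹) ^ 2)) by ring,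
    ← mul_assoc, hcJ0 hv]
  field_simp
  ring



variable {v : ℝ≥0} {μ : ℝ}

lemma gaussianReal_eq_withDensity (μ : ℝ) (hv : v ≠ 0) :
    gaussianReal μ v = volume.withDensity
      (fun x => ((gaussianPDFReal μ v x).toNNReal : ℝ≥0∞)) := by
  rw [gaussianReal_of_var_ne_zero μ hv]
  rfl

lemma pdf_shift (μ : ℝ) (k : ℕ) (x : ℝ) :
    gaussianPDFReal 0 v (x - μ) * (x - μ + μ) ^ k = gaussianPDFReal μ v x * x ^ k := by
  rw [gaussianPDFReal_sub, zero_add, sub_add_cancel]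

lemma integrable_pdf_shift_pow (μ : ℝ) (hv : v ≠ 0) (k : ℕ) :
    Integrable (fun y : ℝ => gaussianPDFReal 0 v y * (y + μ) ^ k) := by
  have h : ∀ y : ℝ, gaussianPDFReal 0 v y * (y + μ) ^ k
      = ∑ j ∈ Finset.range (k + 1),
        (gaussianPDFReal 0 v y * y ^ j) * (μ ^ (k - j) * (k.choose j : ℝ)) := by
    intro y
    rw [add_pow, Finset.mul_sum]
    exact Finset.sum_congr rfl fun j _ => by ring
  simp only [h]
  exact integrable_finset_sum _ fun j _ => (integrable_pdf0_pow hv j).mul_const _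

lemma integrable_pow_gaussianReal (hv : v ≠ 0) (k : ℕ) :
    Integrable (fun x : ℝ => x ^ k) (gaussianReal μ v) := by
  rw [gaussianReal_eq_withDensity μ hv,
    integrable_withDensity_iff_integrable_coe_smul
      (measurable_gaussianPDFReal μ v).real_toNNReal]
  have h := (integrable_pdf_shift_pow μ hv k).comp_sub_right μ
  refine h.congr (Filter.Eventually.of_forall fun x => ?_)
  simp only [Function.comp, pdf_shift]
  simp [Real.coe_toNNReal _ (gaussianPDFReal_nonneg μ v x)]

lemma integral_pow_gaussianReal (hv : v ≠ 0) (k : ℕ) :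
    ∫ x, x ^ k ∂(gaussianReal μ v)
      = ∑ j ∈ Finset.range (k + 1),
        (∫ y : ℝ, gaussianPDFReal 0 v y * y ^ j) * (μ ^ (k - j) * (k.choose j : ℝ)) := by
  rw [gaussianReal_eq_withDensity μ hv,
    integral_withDensity_eq_integral_smul (measurable_gaussianPDFReal μ v).real_toNNReal]
  have h1 : ∀ x : ℝ, (gaussianPDFReal μ v x).toNNReal • (x ^ k)
      = gaussianPDFReal μ v x * x ^ k := fun x => by
    rw [NNReal.smul_def, smul_eq_mul, Real.coe_toNNReal _ (gaussianPDFReal_nonneg μ v x)]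
  simp only [h1]
  rw [show (fun x : ℝ => gaussianPDFReal μ v x * x ^ k)
      = fun x : ℝ => (fun y => gaussianPDFReal 0 v y * (y + μ) ^ k) (x - μ) by
    ext x; simp only [pdf_shift]]
  rw [integral_sub_right_eq_self (fun y => gaussianPDFReal 0 v y * (y + μ) ^ k) μ]
  have h : ∀ y : ℝ, gaussianPDFReal 0 v y * (y + μ) ^ k
      = ∑ j ∈ Finset.range (k + 1),
        (gaussianPDFReal 0 v y * y ^ j) * (μ ^ (k - j) * (k.choose j : ℝ)) := by
    intro y
    rw [add_pow, Finset.mul_sum]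
    exact Finset.sum_congr rfl fun j _ => by ring
  simp only [h]
  rw [integral_finset_sum _ fun j _ => (integrable_pdf0_pow hv j).mul_const _]
  exact Finset.sum_congr rfl fun j _ => integral_mul_const _ _

lemma M1 (hv : v ≠ 0) : ∫ x, x ∂(gaussianReal μ v) = μ := by
  have h := integral_pow_gaussianReal (μ := μ) hv 1
  simp only [Finset.sum_range_succ, Finset.sum_range_zero, G0 hv, G1 hv] at h
  simpa using h

lemma M2 (hv : v ≠ 0) : ∫ x, x ^ 2 ∂(gaussianReal μ v) = μ ^ 2 + (v : ℝ) := by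
  have h := integral_pow_gaussianReal (μ := μ) hv 2
  simp only [Finset.sum_range_succ, Finset.sum_range_zero, G0 hv, G1 hv, G2 hv] at h
  rw [h]
  norm_num

lemma M3 (hv : v ≠ 0) : ∫ x, x ^ 3 ∂(gaussianReal μ v) = μ ^ 3 + 3 * μ * (v : ℝ) := by
  have h := integral_pow_gaussianReal (μ := μ) hv 3
  simp only [Finset.sum_range_succ, Finset.sum_range_zero, G0 hv, G1 hv, G2 hv, G3 hv] at h
  rw [h]
  norm_num
  ring

lemma M4 (hv : v ≠ 0) :
    ∫ x, x ^ 4 ∂(gaussianReal μ v) = μ ^ 4 + 6 * μ ^ 2 * (v : ℝ) + 3 * (v : ℝ) ^ 2 := by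
  have h := integral_pow_gaussianReal (μ := μ) hv 4
  simp only [Finset.sum_range_succ, Finset.sum_range_zero, G0 hv, G1 hv, G2 hv, G3 hv, G4 hv] at h
  rw [h]
  norm_num [Nat.choose]
  ring

end Aux


section Transfer

variable {Ω : Type*} [MeasureSpace Ω] [IsProbabilityMeasure (ℙ : Measure Ω)]

lemma integrable_rv_pow {W : Ω → ℝ} (hWm : Measurable W) {m : ℝ} {v : ℝ≥0} (hv : v ≠ 0)
    (hW : Measure.map W ℙ = gaussianReal m v) (k : ℕ) :
    Integrable (fun ω => W ω ^ k) ℙ := by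
  have h : Integrable (fun x : ℝ => x ^ k) (Measure.map W ℙ) := by
    rw [hW]; exact integrable_pow_gaussianReal hv k
  rw [integrable_map_measure (by fun_prop) hWm.aemeasurable] at h
  exact h

lemma integral_rv_pow {W : Ω → ℝ} (hWm : Measurable W) {m : ℝ} {v : ℝ≥0}
    (hW : Measure.map W ℙ = gaussianReal m v) (k : ℕ) :
    ∫ ω, W ω ^ k ∂ℙ = ∫ x, x ^ k ∂(gaussianReal m v) := by
  rw [← hW, integral_map hWm.aemeasurable (by fun_prop)]

end Transfer

theorem stmt_4 {Ω : Type*} [MeasureSpace Ω] [IsProbabilityMeasure (ℙ : Measure Ω)]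
    (β γ σX σY : ℝ) (hσX : 0 < σX) (hσY : 0 < σY)
    (X Y : Ω → ℝ) (hXm : Measurable X) (hYm : Measurable Y)
    (hX : Measure.map X ℙ = gaussianReal γ (Real.toNNReal (σX ^ 2)))
    (hY : Measure.map Y ℙ = gaussianReal (β * γ) (Real.toNNReal (σY ^ 2)))
    (hind : IndepFun X Y ℙ) :
    variance (fun ω => (X ω * Y ω - β * X ω ^ 2 + β * σX ^ 2) / σY ^ 2) ℙ =
      (γ ^ 2 / σY ^ 2 + σX ^ 2 / σY ^ 2) +
        β ^ 2 * (σX ^ 2 / σY ^ 2) * (γ ^ 2 / σY ^ 2 + 2 * (σX ^ 2 / σY ^ 2)) := by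
  have hvX : Real.toNNReal (σX ^ 2) ≠ 0 := by
    simp [Real.toNNReal_eq_zero, not_le]
    positivity
  have hvY : Real.toNNReal (σY ^ 2) ≠ 0 := by
    simp [Real.toNNReal_eq_zero, not_le]
    positivity
  have hcX : ((Real.toNNReal (σX ^ 2)) : ℝ) = σX ^ 2 := Real.coe_toNNReal _ (by positivity)
  have hcY : ((Real.toNNReal (σY ^ 2)) : ℝ) = σY ^ 2 := Real.coe_toNNReal _ (by positivity)
  -- integrability of powers
  have IX1 : Integrable (fun ω => X ω) ℙ := by
    simpa using integrable_rv_pow hXm hvX hX 1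
  have IX2 : Integrable (fun ω => X ω ^ 2) ℙ := integrable_rv_pow hXm hvX hX 2
  have IX3 : Integrable (fun ω => X ω ^ 3) ℙ := integrable_rv_pow hXm hvX hX 3
  have IX4 : Integrable (fun ω => X ω ^ 4) ℙ := integrable_rv_pow hXm hvX hX 4
  have IY1 : Integrable (fun ω => Y ω) ℙ := by
    simpa using integrable_rv_pow hYm hvY hY 1
  have IY2 : Integrable (fun ω => Y ω ^ 2) ℙ := integrable_rv_pow hYm hvY hY 2
  -- moments
  have EX1 : ∫ ω, X ω ∂ℙ = γ := by
    have := integral_rv_pow hXm hX 1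
    simpa [M1 hvX] using this
  have EX2 : ∫ ω, X ω ^ 2 ∂ℙ = γ ^ 2 + σX ^ 2 := by
    rw [integral_rv_pow hXm hX 2, M2 hvX, hcX]
  have EX3 : ∫ ω, X ω ^ 3 ∂ℙ = γ ^ 3 + 3 * γ * σX ^ 2 := by
    rw [integral_rv_pow hXm hX 3, M3 hvX, hcX]
  have EX4 : ∫ ω, X ω ^ 4 ∂ℙ = γ ^ 4 + 6 * γ ^ 2 * σX ^ 2 + 3 * (σX ^ 2) ^ 2 := by
    rw [integral_rv_pow hXm hX 4, M4 hvX, hcX]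
  have EY1 : ∫ ω, Y ω ∂ℙ = β * γ := by
    have := integral_rv_pow hYm hY 1
    simpa [M1 hvY] using this
  have EY2 : ∫ ω, Y ω ^ 2 ∂ℙ = (β * γ) ^ 2 + σY ^ 2 := by
    rw [integral_rv_pow hYm hY 2, M2 hvY, hcY]
  -- independence of powers
  have ind11 : IndepFun X Y ℙ := hind
  have ind21 : IndepFun (fun ω => X ω ^ 2) (fun ω => Y ω) ℙ :=
    hind.comp (measurable_id.pow_const 2) measurable_id
  have ind22 : IndepFun (fun ω => X ω ^ 2) (fun ω => Y ω ^ 2) ℙ :=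
    hind.comp (measurable_id.pow_const 2) (measurable_id.pow_const 2)
  have ind31 : IndepFun (fun ω => X ω ^ 3) (fun ω => Y ω) ℙ :=
    hind.comp (measurable_id.pow_const 3) measurable_id
  -- products
  have I11 : Integrable (fun ω => X ω * Y ω) ℙ := ind11.integrable_mul IX1 IY1
  have I22 : Integrable (fun ω => X ω ^ 2 * Y ω ^ 2) ℙ := ind22.integrable_mul IX2 IY2
  have I31 : Integrable (fun ω => X ω ^ 3 * Y ω) ℙ := ind31.integrable_mul IX3 IY1
  have E11 : ∫ ω, X ω * Y ω ∂ℙ = γ * (β * γ) := by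
    have h : ∫ ω, X ω * Y ω ∂ℙ = (∫ ω, X ω ∂ℙ) * ∫ ω, Y ω ∂ℙ :=
      ind11.integral_fun_mul_eq_mul_integral IX1.1 IY1.1
    rw [h, EX1, EY1]
  have E22 : ∫ ω, X ω ^ 2 * Y ω ^ 2 ∂ℙ = (γ ^ 2 + σX ^ 2) * ((β * γ) ^ 2 + σY ^ 2) := by
    have h : ∫ ω, X ω ^ 2 * Y ω ^ 2 ∂ℙ = (∫ ω, X ω ^ 2 ∂ℙ) * ∫ ω, Y ω ^ 2 ∂ℙ :=
      ind22.integral_fun_mul_eq_mul_integral IX2.1 IY2.1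
    rw [h, EX2, EY2]
  have E31 : ∫ ω, X ω ^ 3 * Y ω ∂ℙ = (γ ^ 3 + 3 * γ * σX ^ 2) * (β * γ) := by
    have h : ∫ ω, X ω ^ 3 * Y ω ∂ℙ = (∫ ω, X ω ^ 3 ∂ℙ) * ∫ ω, Y ω ∂ℙ :=
      ind31.integral_fun_mul_eq_mul_integral IX3.1 IY1.1
    rw [h, EX3, EY1]
  -- the centered (unscaled) variable
  set A : Ω → ℝ := fun ω => X ω * Y ω - β * X ω ^ 2 + β * σX ^ 2 with hA
  have Isub : Integrable (fun ω => X ω * Y ω - β * X ω ^ 2) ℙ := I11.sub (IX2.const_mul β)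
  have IA : Integrable A ℙ := by
    rw [hA]; exact Isub.add (integrable_const _)
  have EA : ∫ ω, A ω ∂ℙ = 0 := by
    rw [hA]
    simp only
    rw [integral_add Isub (integrable_const _), integral_sub I11 (IX2.const_mul β),
      integral_const_mul, integral_const, E11, EX2]
    simp only [measure_univ, ENNReal.toReal_one, one_smul, smul_eq_mul, probReal_univ]
    ring
  have hA2 : (fun ω => A ω ^ 2) = fun ω =>
      X ω ^ 2 * Y ω ^ 2 + β ^ 2 * X ω ^ 4 + β ^ 2 * (σX ^ 2) ^ 2
        - 2 * β * (X ω ^ 3 * Y ω) + 2 * (β * σX ^ 2) * (X ω * Y ω)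
        - 2 * (β ^ 2 * σX ^ 2) * X ω ^ 2 := by
    ext ω; rw [hA]; ring
  have P1 : Integrable (fun ω => X ω ^ 2 * Y ω ^ 2 + β ^ 2 * X ω ^ 4) ℙ :=
    I22.add (IX4.const_mul _)
  have P2 : Integrable (fun ω => X ω ^ 2 * Y ω ^ 2 + β ^ 2 * X ω ^ 4
      + β ^ 2 * (σX ^ 2) ^ 2) ℙ := P1.add (integrable_const _)
  have P3 : Integrable (fun ω => X ω ^ 2 * Y ω ^ 2 + β ^ 2 * X ω ^ 4
      + β ^ 2 * (σX ^ 2) ^ 2 - 2 * β * (X ω ^ 3 * Y ω)) ℙ := P2.sub (I31.const_mul _)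
  have P4 : Integrable (fun ω => X ω ^ 2 * Y ω ^ 2 + β ^ 2 * X ω ^ 4
      + β ^ 2 * (σX ^ 2) ^ 2 - 2 * β * (X ω ^ 3 * Y ω)
      + 2 * (β * σX ^ 2) * (X ω * Y ω)) ℙ := P3.add (I11.const_mul _)
  have IA2 : Integrable (fun ω => A ω ^ 2) ℙ := by
    rw [hA2]; exact P4.sub (IX2.const_mul _)
  have EA2 : ∫ ω, A ω ^ 2 ∂ℙ =
      (γ ^ 2 + σX ^ 2) * σY ^ 2 + β ^ 2 * σX ^ 2 * (γ ^ 2 + 2 * σX ^ 2) := by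
    rw [hA2]
    rw [integral_sub P4 (IX2.const_mul _), integral_add P3 (I11.const_mul _),
      integral_sub P2 (I31.const_mul _), integral_add P1 (integrable_const _),
      integral_add I22 (IX4.const_mul _),
      integral_const_mul, integral_const_mul, integral_const_mul, integral_const_mul,
      integral_const, integral_const_mul, E22, E31, E11, EX2, EX4]
    simp only [measure_univ, ENNReal.toReal_one, one_smul, smul_eq_mul, probReal_univ]
    ring
  -- the scaled variable
  have hfA : (fun ω => (X ω * Y ω - β * X ω ^ 2 + β * σX ^ 2) / σY ^ 2)
      = fun ω => (σY ^ 2)⁻¹ * A ω := by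
    ext ω; rw [hA]; ring
  have hfm : AEStronglyMeasurable (fun ω => (σY ^ 2)⁻¹ * A ω) ℙ := by
    rw [hA]
    exact (((((hXm.mul hYm).sub ((hXm.pow_const 2).const_mul β)).add_const
      (β * σX ^ 2)).const_mul ((σY ^ 2)⁻¹)).aestronglyMeasurable)
  have memf : MemLp (fun ω => (σY ^ 2)⁻¹ * A ω) 2 ℙ := by
    rw [memLp_two_iff_integrable_sq hfm]
    have h := IA2.const_mul ((σY ^ 2)⁻¹ ^ 2)
    refine h.congr (Filter.Eventually.of_forall fun ω => ?_)
    simp only [Pi.pow_apply]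
    ring
  rw [hfA, variance_eq_sub memf]
  have h1 : ∫ ω, ((fun ω => (σY ^ 2)⁻¹ * A ω) ^ 2) ω ∂ℙ
      = (σY ^ 2)⁻¹ ^ 2 * ∫ ω, A ω ^ 2 ∂ℙ := by
    rw [← integral_const_mul]
    congr 1 with ω
    simp only [Pi.pow_apply]
    ring
  have h2 : ∫ ω, (σY ^ 2)⁻¹ * A ω ∂ℙ = 0 := by
    rw [integral_const_mul, EA, mul_zero]
  simp only [Pi.pow_apply] at h1 ⊢
  rw [h1, h2, EA2]
  have hY2 : σY ^ 2 ≠ 0 := by positivity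
  field_simp
  ring
end

section
/- Let δ_1, …, δ_p be real numbers, not all equal, and let φ be the standard normal density. Then the function λ ↦ (∑_{j=1}^p δ_j³ φ(λ − δ_j)) / (∑_{j=1}^p δ_j² φ(λ − δ_j)) minus (∑_{j=1}^p δ_j φ(λ − δ_j)) / (∑_{j=1}^p φ(λ − δ_j)) is strictly positive for all λ ∈ ℝ, assuming all δ_j > 0. -/
/-!
With weights `w j = φ(λ - δ j) > 0`, the claim is the weighted moment inequality
`M₁ M₂ < M₃ M₀`, where `Mₖ = ∑ δ j ^ k * w j`. Symmetrising over pairs of indices gives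
`2 (M₃ M₀ - M₁ M₂) = ∑ᵢ ∑ⱼ wᵢ wⱼ (δᵢ + δⱼ) (δᵢ - δⱼ)²`, a sum of nonnegative terms
that is strictly positive as soon as two of the `δ j` differ.
-/

open Finset

section WeightedMoments

variable {ι : Type*} [Fintype ι]

theorem two_mul_sum_pow_three_mul_sum_sub_eq_sum_sum {R : Type*} [CommRing R] (δ w : ι → R) :
    2 * ((∑ i, δ i ^ 3 * w i) * (∑ i, w i) - (∑ i, δ i * w i) * (∑ i, δ i ^ 2 * w i)) =
      ∑ i, ∑ j, w i * w j * ((δ i + δ j) * (δ i - δ j) ^ 2) := by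
  have hsplit :
      2 * ((∑ i, δ i ^ 3 * w i) * (∑ i, w i) - (∑ i, δ i * w i) * (∑ i, δ i ^ 2 * w i)) =
        (∑ i, δ i ^ 3 * w i) * (∑ i, w i) + (∑ i, w i) * (∑ i, δ i ^ 3 * w i)
          - (∑ i, δ i ^ 2 * w i) * (∑ i, δ i * w i) - (∑ i, δ i * w i) * (∑ i, δ i ^ 2 * w i) := by
    ring
  rw [hsplit]
  simp only [sum_mul_sum, ← sum_add_distrib, ← sum_sub_distrib]
  exact sum_congr rfl fun i _ => sum_congr rfl fun j _ => by ring

theorem sum_mul_mul_sum_lt_sum_pow_three_mul_mul_sum (δ w : ι → ℝ) (hδ : ∀ i, 0 ≤ δ i)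
    (hw : ∀ i, 0 < w i) (hne : ∃ i j, δ i ≠ δ j) :
    (∑ i, δ i * w i) * (∑ i, δ i ^ 2 * w i) < (∑ i, δ i ^ 3 * w i) * (∑ i, w i) := by
  obtain ⟨i₀, j₀, hij⟩ := hne
  have hterm : ∀ i j, 0 ≤ w i * w j * ((δ i + δ j) * (δ i - δ j) ^ 2) := fun i j => by
    have := hδ i; have := hδ j; have := hw i; have := hw j; positivity
  have hterm₀ : 0 < w i₀ * w j₀ * ((δ i₀ + δ j₀) * (δ i₀ - δ j₀) ^ 2) := by
    have hsum : 0 < δ i₀ + δ j₀ := by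
      by_contra! h
      exact hij (by linarith [hδ i₀, hδ j₀])
    have := hw i₀; have := hw j₀; have := sub_ne_zero.mpr hij; positivity
  have hpos : 0 < ∑ i, ∑ j, w i * w j * ((δ i + δ j) * (δ i - δ j) ^ 2) :=
    sum_pos' (fun i _ => sum_nonneg fun j _ => hterm i j)
      ⟨i₀, mem_univ _, sum_pos' (fun j _ => hterm i₀ j) ⟨j₀, mem_univ _, hterm₀⟩⟩
  linarith [two_mul_sum_pow_three_mul_sum_sub_eq_sum_sum δ w]

end WeightedMoments

theorem stmt_13 (p : ℕ) (δ : Fin p → ℝ) (hpos : ∀ j, 0 < δ j)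
    (hne : ∃ i j, δ i ≠ δ j) :
    ∀ l : ℝ,
      0 < (∑ j, δ j ^ 3 * ((Real.sqrt (2 * Real.pi))⁻¹ * Real.exp (-(l - δ j) ^ 2 / 2))) /
            (∑ j, δ j ^ 2 * ((Real.sqrt (2 * Real.pi))⁻¹ * Real.exp (-(l - δ j) ^ 2 / 2))) -
          (∑ j, δ j * ((Real.sqrt (2 * Real.pi))⁻¹ * Real.exp (-(l - δ j) ^ 2 / 2))) /
            (∑ j, (Real.sqrt (2 * Real.pi))⁻¹ * Real.exp (-(l - δ j) ^ 2 / 2)) := by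
  intro l
  set w : Fin p → ℝ := fun j => (Real.sqrt (2 * Real.pi))⁻¹ * Real.exp (-(l - δ j) ^ 2 / 2)
  have hw : ∀ j, 0 < w j := fun j => by positivity
  have hmoment :=
    sum_mul_mul_sum_lt_sum_pow_three_mul_mul_sum δ w (fun j => (hpos j).le) hw hne
  obtain ⟨i₀, -, -⟩ := hne
  have hS₀ : 0 < ∑ j, w j := sum_pos (fun j _ => hw j) ⟨i₀, mem_univ _⟩
  have hS₂ : 0 < ∑ j, δ j ^ 2 * w j :=
    sum_pos (fun j _ => mul_pos (pow_pos (hpos j) 2) (hw j)) ⟨i₀, mem_univ _⟩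
  rw [sub_pos, div_lt_div_iff₀ hS₀ hS₂]
  linarith
end

section
/- Let δ_1, …, δ_p > 0, not all equal, and φ the standard normal density. Define f(λ) = ∑_j δ_j² Φ(δ_j − λ) and g(λ) = ∑_j Φ(δ_j − λ), where Φ is the standard normal CDF. Then the derivative ratio f′(λ)/g′(λ) = (∑_j δ_j² φ(λ − δ_j)) / (∑_j φ(λ − δ_j)) is strictly increasing in λ on ℝ. -/
/-!
The ratio is the average of `δ_j²` under the weights `φ(λ - δ_j)`. For `λ₁ < λ₂` the likelihood
ratio `φ(λ₂ - δ_j) / φ(λ₁ - δ_j) = C · exp ((λ₂ - λ₁) δ_j)` increases with `δ_j`, hence with `δ_j²`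
since `δ_j > 0`. Reweighting by a ratio that increases along `a` raises the average of `a`:
cross-multiplied, the difference of the two averages is half the symmetric double sum
`∑ᵢ ∑ⱼ (aᵢ - aⱼ)(vᵢuⱼ - vⱼuᵢ)`, whose terms are all nonnegative.
-/

open Real

theorem sum_mul_div_sum_lt_sum_mul_div_sum {ι : Type*} [Fintype ι] (a u v : ι → ℝ)
    (hu : 0 < ∑ i, u i) (hv : 0 < ∑ i, v i)
    (hmono : ∀ i j, 0 ≤ (a i - a j) * (v i * u j - v j * u i))
    (hstrict : ∃ i j, 0 < (a i - a j) * (v i * u j - v j * u i)) :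
    (∑ i, a i * u i) / ∑ i, u i < (∑ i, a i * v i) / ∑ i, v i := by
  obtain ⟨i₀, j₀, h₀⟩ := hstrict
  have hsum_pos : 0 < ∑ i, ∑ j, (a i - a j) * (v i * u j - v j * u i) :=
    Finset.sum_pos' (fun i _ => Finset.sum_nonneg fun j _ => hmono i j)
      ⟨i₀, Finset.mem_univ _, Finset.sum_pos' (fun j _ => hmono i₀ j) ⟨j₀, Finset.mem_univ _, h₀⟩⟩
  have hsum_eq : ∑ i, ∑ j, (a i - a j) * (v i * u j - v j * u i) =
      2 * ((∑ i, a i * v i) * (∑ i, u i) - (∑ i, a i * u i) * ∑ i, v i) := by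
    calc ∑ i, ∑ j, (a i - a j) * (v i * u j - v j * u i)
        = ∑ i, ∑ j, (a i * (v i * u j - v j * u i) + a j * (v j * u i - v i * u j)) :=
          Finset.sum_congr rfl fun i _ => Finset.sum_congr rfl fun j _ => by ring
      _ = 2 * ∑ i, ∑ j, a i * (v i * u j - v j * u i) := by
          have hswap : ∑ i, ∑ j, a j * (v j * u i - v i * u j) =
              ∑ i, ∑ j, a i * (v i * u j - v j * u i) := Finset.sum_comm
          simp only [Finset.sum_add_distrib, hswap]
          ring
      _ = 2 * ∑ i, ∑ j, (a i * v i * u j - a i * u i * v j) := by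
          congr 1
          exact Finset.sum_congr rfl fun i _ => Finset.sum_congr rfl fun j _ => by ring
      _ = _ := by simp only [Finset.sum_sub_distrib, ← Finset.sum_mul_sum]
  rw [div_lt_div_iff₀ hu hv]
  linarith

theorem mul_exp_mul_sub_one_pos {t z : ℝ} (ht : 0 < t) (hz : z ≠ 0) :
    0 < z * (exp (t * z) - 1) := by
  rcases hz.lt_or_gt with hz | hz
  · exact mul_pos_of_neg_of_neg hz (sub_neg.2 (exp_lt_one_iff.2 (mul_neg_of_pos_of_neg ht hz)))
  · exact mul_pos hz (sub_pos.2 (one_lt_exp_iff.2 (mul_pos ht hz)))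

theorem gaussian_cross_sub (s x y l₁ l₂ : ℝ) :
    s * exp (-(l₂ - x) ^ 2 / 2) * (s * exp (-(l₁ - y) ^ 2 / 2)) -
        s * exp (-(l₂ - y) ^ 2 / 2) * (s * exp (-(l₁ - x) ^ 2 / 2)) =
      s ^ 2 * exp (-(l₁ - x) ^ 2 / 2) * exp (-(l₂ - y) ^ 2 / 2) *
        (exp ((l₂ - l₁) * (x - y)) - 1) := by
  have hexp : -(l₂ - x) ^ 2 / 2 + -(l₁ - y) ^ 2 / 2 =
      -(l₁ - x) ^ 2 / 2 + -(l₂ - y) ^ 2 / 2 + (l₂ - l₁) * (x - y) := by ring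
  have := congrArg exp hexp
  simp only [exp_add] at this
  linear_combination s ^ 2 * this

theorem sq_sub_sq_mul_gaussian_cross_sub_pos {s x y l₁ l₂ : ℝ} (hs : s ≠ 0) (hxy : 0 < x + y)
    (hne : x ≠ y) (hl : l₁ < l₂) :
    0 < (x ^ 2 - y ^ 2) *
      (s * exp (-(l₂ - x) ^ 2 / 2) * (s * exp (-(l₁ - y) ^ 2 / 2)) -
        s * exp (-(l₂ - y) ^ 2 / 2) * (s * exp (-(l₁ - x) ^ 2 / 2))) := by
  have hsign := mul_exp_mul_sub_one_pos (sub_pos.2 hl) (sub_ne_zero.2 hne)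
  rw [gaussian_cross_sub]
  calc (0 : ℝ) < (x + y) * (s ^ 2 * exp (-(l₁ - x) ^ 2 / 2) * exp (-(l₂ - y) ^ 2 / 2)) *
        ((x - y) * (exp ((l₂ - l₁) * (x - y)) - 1)) := by positivity
    _ = _ := by ring

theorem stmt_14 (p : ℕ) (δ : Fin p → ℝ) (hpos : ∀ j, 0 < δ j)
    (hne : ∃ i j, δ i ≠ δ j) :
    StrictMono (fun l : ℝ =>
      (∑ j, δ j ^ 2 * ((Real.sqrt (2 * Real.pi))⁻¹ * Real.exp (-(l - δ j) ^ 2 / 2))) /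
        (∑ j, (Real.sqrt (2 * Real.pi))⁻¹ * Real.exp (-(l - δ j) ^ 2 / 2))) := by
  obtain ⟨i₀, j₀, hij⟩ := hne
  set s := (Real.sqrt (2 * Real.pi))⁻¹
  have hs : s ≠ 0 := by positivity
  have hsum_pos (l : ℝ) : 0 < ∑ j, s * exp (-(l - δ j) ^ 2 / 2) :=
    Finset.sum_pos (fun j _ => by positivity) ⟨i₀, Finset.mem_univ _⟩
  intro l₁ l₂ hl
  have hpair (i j : Fin p) (h : δ i ≠ δ j) :=
    sq_sub_sq_mul_gaussian_cross_sub_pos hs (add_pos (hpos i) (hpos j)) h hl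
  refine sum_mul_div_sum_lt_sum_mul_div_sum (fun j => δ j ^ 2) _ _ (hsum_pos l₁) (hsum_pos l₂)
    (fun i j => ?_) ⟨i₀, j₀, hpair i₀ j₀ hij⟩
  rcases eq_or_ne (δ i) (δ j) with h | h
  · simp [h]
  · exact (hpair i j h).le
end
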